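/- arXiv:1207.0983 — 2 statements merged into one kernel-verified Lean document; each statement's English description precedes it below -/
import Mathlib

section
/- Suppose k ≥ 4 and let D̄ ⊆ E be a dimer covering, i.e., every vertex of 𝒯^k is incident to exactly one edge of D̄. Then d_{D̄} = 1 < (k-1)/2, and the weakly periodic configurations σ^{D̄+} and σ^{D̄-} are ground state configurations; moreover, for every finite nonempty connected set C ⊆ V, H(σ_C) - H(σ^{D̄+}) ≥ 2J(k-3)|C| > 0. -/
/-!
Flipping a finite set `C` changes only the bonds with exactly one endpoint in `C`; such a bond
contributes `+2J` to the excess energy, or `-2J` if it is a dimer. Each vertex carries exactly one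
dimer, so at most `|C|` boundary bonds are dimers. The graph induced on `C` is a forest, so `C`
spans at most `|C| - 1` edges and, counting the `(k + 1)|C|` half-edges at `C`, at least
`(k - 1)|C| + 2` bonds leave `C`. Hence the excess energy is at least `2J((k - 3)|C| + 2)`.
-/

open Classical

/-- `G` is a Cayley tree with branching number `k`: an infinite connected acyclic
simple graph in which every vertex has exactly `k + 1` neighbors. -/
structure IsCayleyTree {V : Type*} (G : SimpleGraph V) (k : ℕ) : Prop where
  infinite : Infinite V
  connected : G.Connected
  acyclic : G.IsAcyclic
  degree : ∀ v : V, (G.neighborSet v).ncard = k + 1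

/-- A spin configuration takes values in `{-1, +1}`. -/
def IsSpin {V : Type*} (σ : V → ℤ) : Prop := ∀ v, σ v = 1 ∨ σ v = -1

/-- `σ` is frustrated exactly on the edges of `D`: for every edge `{x,y}` of `G`,
`σ x * σ y = -1` if `{x,y} ∈ D` and `σ x * σ y = 1` otherwise. -/
def SatisfiesD {V : Type*} (G : SimpleGraph V) (D : Set (Sym2 V)) (σ : V → ℤ) : Prop :=
  ∀ x y : V, G.Adj x y →
    (s(x, y) ∈ D → σ x * σ y = -1) ∧ (s(x, y) ∉ D → σ x * σ y = 1)

/-- The excess energy `H(σ) - H(σbase) = J * Σ_{{x,y} ∈ E} (σbase x * σbase y - σ x * σ y)`,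
a sum with finitely many nonzero terms when `σ` and `σbase` differ at finitely many sites. -/
noncomputable def excessEnergy {V : Type*} (G : SimpleGraph V) (J : ℝ) (σ σbase : V → ℤ) : ℝ :=
  J * ∑ᶠ e ∈ G.edgeSet,
      ((Sym2.lift ⟨fun x y => σbase x * σbase y - σ x * σ y, fun _ _ => by ring⟩ e : ℤ) : ℝ)

/-- The configuration obtained from `σ` by flipping all spins in `C`. -/
noncomputable def flipSpins {V : Type*} (σ : V → ℤ) (C : Set V) : V → ℤ :=
  fun v => if v ∈ C then -σ v else σ v

/-- The number `d_D(v)` of edges of `D` incident to the vertex `v`. -/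
noncomputable def incidentCount {V : Type*} (D : Set (Sym2 V)) (v : V) : ℕ :=
  {e ∈ D | v ∈ e}.ncard

/-- A set of vertices is connected if any two of its vertices are joined by a
walk staying within the set. -/
def SetConnected {V : Type*} (G : SimpleGraph V) (S : Set V) : Prop :=
  ∀ x ∈ S, ∀ y ∈ S, ∃ p : G.Walk x y, ∀ z ∈ p.support, z ∈ S

open Finset

namespace SimpleGraph

variable {V : Type*} {G : SimpleGraph V}

lemma IsAcyclic.card_edgeFinset_add_one_le [Fintype V] [Nonempty V] [Fintype G.edgeSet]
    (hG : G.IsAcyclic) : #G.edgeFinset + 1 ≤ Fintype.card V := by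
  obtain ⟨T, hGT, -, hT⟩ := connected_top.exists_isTree_le_of_le_of_isAcyclic le_top hG
  rw [← hT.card_edgeFinset]
  gcongr

lemma IsAcyclic.sum_card_neighborFinset_inter_add_two_le [G.LocallyFinite] (hG : G.IsAcyclic)
    {s : Finset V} (hs : s.Nonempty) :
    ∑ x ∈ s, #(G.neighborFinset x ∩ s) + 2 ≤ 2 * #s := by
  have : Nonempty (s : Set V) := hs.to_subtype
  have hdeg (x : (s : Set V)) : (G.induce s).degree x = #(G.neighborFinset x ∩ s) := by
    rw [← card_neighborFinset_eq_degree, ← card_map (.subtype (· ∈ (s : Set V)))]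
    congr 1
    ext y
    simp
  have hforest := (hG.induce s).card_edgeFinset_add_one_le
  simp only [coe_sort_coe, Fintype.card_coe] at hforest
  rw [← sum_coe_sort s]
  simp only [← hdeg]
  rw [sum_degrees_eq_twice_card_edges]
  omega

lemma IsAcyclic.add_one_mul_card_add_two_le_sum_card_sdiff [G.LocallyFinite] (hG : G.IsAcyclic)
    {k : ℕ} (hdeg : ∀ v, k + 1 ≤ G.degree v) {s : Finset V} (hs : s.Nonempty) :
    (k + 1) * #s + 2 ≤ ∑ x ∈ s, #(G.neighborFinset x \ s) + 2 * #s := by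
  have hdegsum : (k + 1) * #s ≤ ∑ x ∈ s, G.degree x := by
    simpa [mul_comm] using sum_le_sum fun x (_ : x ∈ s) => hdeg x
  have hsplit : ∑ x ∈ s, G.degree x =
      ∑ x ∈ s, #(G.neighborFinset x \ s) + ∑ x ∈ s, #(G.neighborFinset x ∩ s) := by
    rw [← sum_add_distrib]
    exact sum_congr rfl fun x _ => by rw [card_sdiff_add_card_inter, card_neighborFinset_eq_degree]
  have hinside := hG.sum_card_neighborFinset_inter_add_two_le hs
  omega

end SimpleGraph

section Spins

variable {V : Type*} {G : SimpleGraph V}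

lemma IsSpin.neg {σ : V → ℤ} (hσ : IsSpin σ) : IsSpin (fun v => -σ v) := fun v => by
  rcases hσ v with h | h <;> simp [h]

lemma SatisfiesD.neg {D : Set (Sym2 V)} {σ : V → ℤ} (h : SatisfiesD G D σ) :
    SatisfiesD G D (fun v => -σ v) := by
  simpa only [SatisfiesD, neg_mul_neg] using h

lemma IsSpin.flipSpins_setOf_ne {σ τ : V → ℤ} (hσ : IsSpin σ) (hτ : IsSpin τ) :
    flipSpins σ {v | τ v ≠ σ v} = τ := by
  funext v
  rcases hσ v with h | h <;> rcases hτ v with h' | h' <;> simp [flipSpins, h, h']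

lemma SatisfiesD.card_sub_two_le_sum_mul {D : Set (Sym2 V)} {σ : V → ℤ}
    (hσD : SatisfiesD G D σ) {x : V} (hx : {e ∈ D | x ∈ e}.Subsingleton) {T : Finset V}
    (hT : ∀ y ∈ T, G.Adj x y) : (#T : ℤ) - 2 ≤ ∑ y ∈ T, σ x * σ y := by
  have hF : #(T.filter fun y => s(x, y) ∈ D) ≤ 1 := by
    refine Finset.card_le_one.2 fun a ha b hb => ?_
    rw [mem_filter] at ha hb
    exact Sym2.congr_right.1 (hx ⟨ha.2, Sym2.mem_mk_left x a⟩ ⟨hb.2, Sym2.mem_mk_left x b⟩)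
  have hcard := card_filter_add_card_filter_not (s := T) (fun y => s(x, y) ∈ D)
  rw [← sum_filter_add_sum_filter_not T (fun y => s(x, y) ∈ D),
    sum_congr rfl fun y hy => (hσD x y (hT y (mem_filter.1 hy).1)).1 (mem_filter.1 hy).2,
    sum_congr rfl fun y hy => (hσD x y (hT y (mem_filter.1 hy).1)).2 (mem_filter.1 hy).2]
  simp only [sum_const, smul_neg, nsmul_eq_mul, mul_one]
  omega

end Spins

section FlipEnergy

open SimpleGraph

variable {V : Type*} (σ : V → ℤ) (s : Finset V)

lemma flipSpins_bond_of_mem_iff {x y : V} (h : x ∈ s ↔ y ∈ s) :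
    σ x * σ y - flipSpins σ s x * flipSpins σ s y = 0 := by
  by_cases hx : x ∈ s <;> simp [flipSpins, hx, ← h]

lemma flipSpins_bond_of_mem_of_notMem {x y : V} (hx : x ∈ s) (hy : y ∉ s) :
    σ x * σ y - flipSpins σ s x * flipSpins σ s y = 2 * σ x * σ y := by
  simp only [flipSpins, mem_coe, hx, hy, if_true, if_false]
  ring

lemma excessEnergy_flipSpins (G : SimpleGraph V) [G.LocallyFinite] (J : ℝ) :
    excessEnergy G J (flipSpins σ s) σ =
      J * ((∑ x ∈ s, ∑ y ∈ G.neighborFinset x \ s, 2 * σ x * σ y : ℤ) : ℝ) := by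
  set bond : Sym2 V → ℝ := fun e => ((Sym2.lift ⟨fun x y => σ x * σ y -
    flipSpins σ s x * flipSpins σ s y, fun _ _ => by ring⟩ e : ℤ) : ℝ)
  set P := s.sigma fun x => G.neighborFinset x \ s
  set B := P.image fun p => s(p.1, p.2)
  have hsupp : G.edgeSet ∩ Function.support bond = ↑B ∩ Function.support bond := by
    ext e
    induction e using Sym2.ind with
    | _ x y =>
      refine and_congr_left fun hne => ?_
      have hcut : (x ∈ s ∧ y ∉ s) ∨ (y ∈ s ∧ x ∉ s) := by
        by_contra! h
        have hiff : x ∈ s ↔ y ∈ s := by tauto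
        exact hne (by
          simp only [bond, Sym2.lift_mk, flipSpins_bond_of_mem_iff σ s hiff, Int.cast_zero])
      simp only [mem_edgeSet, B, P, coe_image, coe_sigma, Set.mem_image,
        Set.mem_sigma_iff, mem_coe, mem_sdiff, mem_neighborFinset, Sigma.exists]
      constructor
      · intro hadj
        rcases hcut with ⟨hx, hy⟩ | ⟨hy, hx⟩
        · exact ⟨x, y, ⟨hx, hadj, hy⟩, rfl⟩
        · exact ⟨y, x, ⟨hy, hadj.symm, hx⟩, Sym2.eq_swap⟩
      · rintro ⟨a, b, ⟨-, hab, -⟩, he⟩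
        exact (G.adj_congr_of_sym2 he).1 hab
  have hinj : Set.InjOn (fun p : Σ _ : V, V => s(p.1, p.2)) ↑P := by
    rintro ⟨x, y⟩ hxy ⟨x', y'⟩ hxy' h
    simp only [P, coe_sigma, Set.mem_sigma_iff, mem_coe, mem_sdiff] at hxy hxy'
    rcases Sym2.eq_iff.1 h with ⟨rfl, rfl⟩ | ⟨rfl, rfl⟩
    · rfl
    · exact absurd hxy.1 hxy'.2.2
  rw [excessEnergy, finsum_mem_eq_sum_of_inter_support_eq bond hsupp, sum_image hinj, sum_sigma]
  push_cast
  congr 1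
  refine sum_congr rfl fun x hx => sum_congr rfl fun y hy => ?_
  simp only [bond, Sym2.lift_mk]
  rw [flipSpins_bond_of_mem_of_notMem σ s hx (mem_sdiff.1 hy).2]
  push_cast
  ring

end FlipEnergy

section DimerEstimate

open SimpleGraph

variable {V : Type*} {G : SimpleGraph V} [G.LocallyFinite] {k : ℕ} {D : Set (Sym2 V)}
  {σ : V → ℤ}

theorem le_excessEnergy_flipSpins (hG : G.IsAcyclic) (hdeg : ∀ v, k + 1 ≤ G.degree v)
    (hD : ∀ v, {e ∈ D | v ∈ e}.Subsingleton) (hσD : SatisfiesD G D σ) {J : ℝ} (hJ : 0 ≤ J)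
    {s : Finset V} (hs : s.Nonempty) :
    2 * J * (((k : ℝ) - 3) * #s + 2) ≤ excessEnergy G J (flipSpins σ s) σ := by
  have hcount := hG.add_one_mul_card_add_two_le_sum_card_sdiff hdeg hs
  have hflip : 2 * ∑ x ∈ s, ((#(G.neighborFinset x \ s) : ℤ) - 2) ≤
      ∑ x ∈ s, ∑ y ∈ G.neighborFinset x \ s, 2 * σ x * σ y := by
    rw [mul_sum]
    refine sum_le_sum fun x _ => ?_
    have hpull : ∑ y ∈ G.neighborFinset x \ s, 2 * σ x * σ y =
        2 * ∑ y ∈ G.neighborFinset x \ s, σ x * σ y := by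
      simp only [mul_sum, mul_assoc]
    have := hσD.card_sub_two_le_sum_mul (hD x) (T := G.neighborFinset x \ s)
      fun y hy => (G.mem_neighborFinset x y).1 (mem_sdiff.1 hy).1
    linarith
  have hZ : 2 * (((k : ℤ) - 3) * #s + 2) ≤
      ∑ x ∈ s, ∑ y ∈ G.neighborFinset x \ s, 2 * σ x * σ y := by
    rw [sum_sub_distrib, sum_const, nsmul_eq_mul] at hflip
    have : ((k : ℤ) + 1) * #s + 2 ≤ ∑ x ∈ s, (#(G.neighborFinset x \ s) : ℤ) + 2 * #s := by
      exact_mod_cast hcount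
    linarith
  rw [excessEnergy_flipSpins]
  calc 2 * J * (((k : ℝ) - 3) * #s + 2) = J * ((2 * (((k : ℤ) - 3) * #s + 2) : ℤ) : ℝ) := by
        push_cast
        ring
    _ ≤ _ := mul_le_mul_of_nonneg_left (by exact_mod_cast hZ) hJ

end DimerEstimate

section GroundState

open SimpleGraph

variable {V : Type*} {G : SimpleGraph V} {k : ℕ} {D : Set (Sym2 V)}

lemma IsCayleyTree.finite_neighborSet (hG : IsCayleyTree G k) (v : V) :
    (G.neighborSet v).Finite :=
  Set.finite_of_ncard_ne_zero (by rw [hG.degree v]; omega)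

lemma IsCayleyTree.degree_eq [G.LocallyFinite] (hG : IsCayleyTree G k) (v : V) :
    G.degree v = k + 1 := by
  rw [← hG.degree v, ← card_neighborSet_eq_degree, ← Nat.card_eq_fintype_card,
    Nat.card_coe_set_eq]

lemma subsingleton_of_incidentCount_eq_one {v : V} (h : incidentCount D v = 1) :
    {e ∈ D | v ∈ e}.Subsingleton := by
  obtain ⟨e, he⟩ := Set.ncard_eq_one.1 h
  rw [he]
  exact Set.subsingleton_singleton

lemma excessEnergy_nonneg_of_finite [G.LocallyFinite] (hk : 3 ≤ k) (hG : G.IsAcyclic)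
    (hdeg : ∀ v, k + 1 ≤ G.degree v) (hD : ∀ v, {e ∈ D | v ∈ e}.Subsingleton)
    {σ τ : V → ℤ} (hσ : IsSpin σ) (hσD : SatisfiesD G D σ) (hτ : IsSpin τ)
    (hfin : {v | τ v ≠ σ v}.Finite) {J : ℝ} (hJ : 0 ≤ J) :
    0 ≤ excessEnergy G J τ σ := by
  rw [← hσ.flipSpins_setOf_ne hτ, ← hfin.coe_toFinset]
  rcases hfin.toFinset.eq_empty_or_nonempty with hempty | hne
  · rw [hempty, excessEnergy_flipSpins]
    simp
  · refine le_trans ?_ (le_excessEnergy_flipSpins hG hdeg hD hσD hJ hne)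
    have hk' : (3 : ℝ) ≤ k := by exact_mod_cast hk
    have : (0 : ℝ) ≤ ((k : ℝ) - 3) * #hfin.toFinset + 2 := by positivity
    positivity

end GroundState

theorem dimer_ground_states_general {V : Type*} (G : SimpleGraph V) (k : ℕ) (hk : 4 ≤ k)
    (hG : IsCayleyTree G k) (J : ℝ) (hJ : 0 < J)
    (Dbar : Set (Sym2 V))
    (hdimer : ∀ v : V, incidentCount Dbar v = 1)
    (σ : V → ℤ) (hσ : IsSpin σ) (hσD : SatisfiesD G Dbar σ) :
    (⨆ v, incidentCount Dbar v) = 1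
      ∧ (1 : ℝ) < ((k : ℝ) - 1) / 2
      ∧ (∀ τ : V → ℤ, IsSpin τ → {v : V | τ v ≠ σ v}.Finite →
          0 ≤ excessEnergy G J τ σ)
      ∧ (∀ τ : V → ℤ, IsSpin τ → {v : V | τ v ≠ -σ v}.Finite →
          0 ≤ excessEnergy G J τ (fun v => -σ v))
      ∧ (∀ C : Set V, C.Finite → C.Nonempty → SetConnected G C →
          excessEnergy G J (flipSpins σ C) σ ≥ 2 * J * ((k : ℝ) - 3) * (C.ncard : ℝ)
            ∧ 0 < excessEnergy G J (flipSpins σ C) σ) := by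
  have : G.LocallyFinite := fun v => (hG.finite_neighborSet v).fintype
  have : Infinite V := hG.infinite
  have hdeg (v : V) : k + 1 ≤ G.degree v := (hG.degree_eq v).ge
  have hD (v : V) := subsingleton_of_incidentCount_eq_one (hdimer v)
  have hk' : (4 : ℝ) ≤ k := by exact_mod_cast hk
  refine ⟨by simp only [hdimer, ciSup_const], by linarith, fun τ hτ hfin => ?_,
    fun τ hτ hfin => ?_, fun C hfin hne _ => ?_⟩
  · exact excessEnergy_nonneg_of_finite (by omega) hG.acyclic hdeg hD hσ hσD hτ hfin hJ.le
  · exact excessEnergy_nonneg_of_finite (by omega) hG.acyclic hdeg hD hσ.neg hσD.neg hτ hfin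
      hJ.le
  · have h := le_excessEnergy_flipSpins hG.acyclic hdeg hD hσD hJ.le (hfin.toFinset_nonempty.2 hne)
    rw [hfin.coe_toFinset, ← Set.ncard_eq_toFinset_card C hfin] at h
    have hC : (0 : ℝ) ≤ ((k : ℝ) - 3) * C.ncard := mul_nonneg (by linarith) C.ncard.cast_nonneg
    constructor <;> nlinarith

/-- For `k ≥ 4` and a dimer covering `D̄`, one has `d_{D̄} = 1 < (k-1)/2`,
the weakly periodic configurations `σ^{D̄+}` and `σ^{D̄-}` are ground state
configurations, and for every finite nonempty connected `C`,
`H(σ_C) - H(σ^{D̄+}) ≥ 2J(k-3)|C| > 0`. -/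
theorem dimer_ground_states {V : Type*} (G : SimpleGraph V) (k : ℕ) (hk : 4 ≤ k)
    (hG : IsCayleyTree G k) (root : V) (J : ℝ) (hJ : 0 < J)
    (Dbar : Set (Sym2 V)) (hDbar : Dbar ⊆ G.edgeSet)
    (hdimer : ∀ v : V, incidentCount Dbar v = 1)
    (σ : V → ℤ) (hσ : IsSpin σ) (hσroot : σ root = 1) (hσD : SatisfiesD G Dbar σ) :
    (⨆ v, incidentCount Dbar v) = 1
      ∧ (1 : ℝ) < ((k : ℝ) - 1) / 2
      ∧ (∀ τ : V → ℤ, IsSpin τ → {v : V | τ v ≠ σ v}.Finite →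
          0 ≤ excessEnergy G J τ σ)
      ∧ (∀ τ : V → ℤ, IsSpin τ → {v : V | τ v ≠ -σ v}.Finite →
          0 ≤ excessEnergy G J τ (fun v => -σ v))
      ∧ (∀ C : Set V, C.Finite → C.Nonempty → SetConnected G C →
          excessEnergy G J (flipSpins σ C) σ ≥ 2 * J * ((k : ℝ) - 3) * (C.ncard : ℝ)
            ∧ 0 < excessEnergy G J (flipSpins σ C) σ) :=
  dimer_ground_states_general G k hk hG J hJ Dbar hdimer σ hσ hσD
end

section
/- The Cayley tree 𝒯^k admits a monomer-dimer covering: there exists a set D* ⊆ E of edges such that (i) for any two distinct edges b', b'' ∈ D* the graph distance between them is at least 2 (no vertex of b' is equal or adjacent to a vertex of b''), and (ii) every vertex v ∈ V is at distance at most 1 from D* (v is an endpoint of some edge of D*, or adjacent to an endpoint of some edge of D*). -/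
open Classical

/-!
Root the tree at a vertex `r` and call `G.dist r v` the level of `v`. As every vertex has at least
two neighbours and only one of them (its parent) is one level closer to `r`, every vertex `u` has
a child `f u`. The dimers are the edges `{u, f u}` with `u` at level `≡ 1 (mod 3)`. Their endpoints
lie at levels `≡ 1, 2 (mod 3)`, and such an endpoint determines its dimer (directly, or through
its unique parent), so endpoints of distinct dimers are neither equal nor adjacent. A vertex at
level `≡ 0` is adjacent to its child and one at level `≡ 2` to its parent, both of level `≡ 1`.
-/

namespace SimpleGraph

variable {V : Type*} {G : SimpleGraph V}

lemma IsAcyclic.eq_of_adj_of_dist_add_one_eq (hG : G.IsAcyclic) {r v w w' : V}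
    (hw : G.Adj w v) (hw' : G.Adj w' v)
    (hdw : G.dist r w + 1 = G.dist r v) (hdw' : G.dist r w' + 1 = G.dist r v) : w = w' := by
  have hrv : G.Reachable r v := Reachable.of_dist_ne_zero (by omega)
  have hpath : ∀ {a} (p : G.Walk r a) (ha : G.Adj a v), p.length = G.dist r a →
      G.dist r a + 1 = G.dist r v → (p.concat ha).IsPath := fun p ha hp hd =>
    (p.concat ha).isPath_of_length_eq_dist (by rw [Walk.length_concat]; omega)
  obtain ⟨p, hp⟩ := (hrv.trans hw.symm.reachable).exists_walk_length_eq_dist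
  obtain ⟨p', hp'⟩ := (hrv.trans hw'.symm.reachable).exists_walk_length_eq_dist
  obtain ⟨rfl, -⟩ := Walk.concat_inj <| congrArg Subtype.val <|
    (hG.subsingleton_path r v).elim ⟨_, hpath p hw hp hdw⟩ ⟨_, hpath p' hw' hp' hdw'⟩
  rfl

lemma IsTree.exists_adj_dist_eq_add_one (hG : G.IsTree) (r : V) {v : V}
    (hv : (G.neighborSet v).Nontrivial) : ∃ c, G.Adj v c ∧ G.dist r c = G.dist r v + 1 := by
  by_contra! h
  obtain ⟨a, ha, b, hb, hab⟩ := hv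
  have hlower : ∀ c, G.Adj v c → G.dist r c + 1 = G.dist r v := fun c hc =>
    ((hG.dist_eq_dist_add_one_of_adj r hc).resolve_right (h c hc)).symm
  exact hab (hG.isAcyclic.eq_of_adj_of_dist_add_one_eq ha.symm hb.symm (hlower a ha) (hlower b hb))

lemma Connected.exists_adj_dist_add_one_eq (hG : G.Connected) {r v : V} (hv : v ≠ r) :
    ∃ p, G.Adj p v ∧ G.dist r p + 1 = G.dist r v := by
  obtain ⟨q, hq⟩ := hG.exists_walk_length_eq_dist r v
  have hq0 : ¬ q.Nil := Walk.not_nil_of_ne hv.symm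
  have hadj := q.adj_penultimate hq0
  refine ⟨q.penultimate, hadj, ?_⟩
  have hle := dist_le q.dropLast
  have hlen := q.length_dropLast_add_one hq0
  have htri := hG.dist_triangle (u := r) (v := q.penultimate) (w := v)
  rw [dist_eq_one_iff_adj.2 hadj] at htri
  omega

variable (G) in
def IsSelfOrParent (r u x : V) : Prop :=
  u = x ∨ (G.Adj u x ∧ G.dist r x = G.dist r u + 1)

lemma IsSelfOrParent.dist_eq {r u x : V} (h : G.IsSelfOrParent r u x) :
    G.dist r x = G.dist r u ∨ G.dist r x = G.dist r u + 1 := by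
  rcases h with rfl | ⟨-, h⟩
  · exact Or.inl rfl
  · exact Or.inr h

lemma IsAcyclic.eq_of_isSelfOrParent (hG : G.IsAcyclic) {r u w x : V}
    (hmod : G.dist r u % 3 = G.dist r w % 3)
    (hu : G.IsSelfOrParent r u x) (hw : G.IsSelfOrParent r w x) : u = w := by
  rcases hu with rfl | ⟨hux, hu⟩ <;> rcases hw with rfl | ⟨hwx, hw⟩
  · rfl
  · omega
  · omega
  · exact hG.eq_of_adj_of_dist_add_one_eq hux hwx hu.symm hw.symm

lemma IsAcyclic.eq_of_isSelfOrParent_of_isSelfOrParent (hG : G.IsAcyclic) {r u u' x y : V}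
    (hu : G.dist r u % 3 = 1) (hu' : G.dist r u' % 3 = 1) (hux : G.IsSelfOrParent r u x)
    (hu'y : G.IsSelfOrParent r u' y) (hxy : G.IsSelfOrParent r x y) : u = u' := by
  refine hG.eq_of_isSelfOrParent (by omega) ?_ hu'y
  rcases hxy with rfl | ⟨hadj, hlev⟩
  · exact hux
  · rcases hux with rfl | ⟨-, h⟩
    · exact Or.inr ⟨hadj, hlev⟩
    · rcases hu'y.dist_eq with h' | h' <;> omega

variable (G) in
def childDimers (r : V) (f : V → V) : Set (Sym2 V) :=
  {e | ∃ u, G.dist r u % 3 = 1 ∧ e = s(u, f u)}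

section childDimers

variable {r : V} {f : V → V}

lemma childDimers_subset_edgeSet (hf : ∀ v, G.Adj v (f v)) : G.childDimers r f ⊆ G.edgeSet := by
  rintro _ ⟨u, -, rfl⟩
  exact hf u

lemma isSelfOrParent_of_mem (hf : ∀ v, G.Adj v (f v) ∧ G.dist r (f v) = G.dist r v + 1)
    {u x : V} (hx : x ∈ s(u, f u)) : G.IsSelfOrParent r u x := by
  rcases Sym2.mem_iff.1 hx with rfl | rfl
  · exact Or.inl rfl
  · exact Or.inr (hf u)

lemma IsTree.two_le_dist_of_mem_childDimers (hG : G.IsTree)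
    (hf : ∀ v, G.Adj v (f v) ∧ G.dist r (f v) = G.dist r v + 1) :
    ∀ b' ∈ G.childDimers r f, ∀ b'' ∈ G.childDimers r f, b' ≠ b'' →
      ∀ x ∈ b', ∀ y ∈ b'', 2 ≤ G.dist x y := by
  rintro _ ⟨u, hu, rfl⟩ _ ⟨u', hu', rfl⟩ hne x hx y hy
  by_contra! hlt
  have hxy : x = y ∨ G.Adj x y := by
    by_contra! h
    exact absurd ((hG.connected x y).one_lt_dist_of_ne_of_not_adj h.1 h.2) (by omega)
  have hux := isSelfOrParent_of_mem hf hx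
  have hu'y := isSelfOrParent_of_mem hf hy
  have huu' : u = u' := by
    rcases hxy with rfl | hadj
    · exact hG.isAcyclic.eq_of_isSelfOrParent (by omega) hux hu'y
    · rcases hG.dist_eq_dist_add_one_of_adj r hadj with h | h
      · exact (hG.isAcyclic.eq_of_isSelfOrParent_of_isSelfOrParent hu' hu hu'y hux
          (Or.inr ⟨hadj.symm, h⟩)).symm
      · exact hG.isAcyclic.eq_of_isSelfOrParent_of_isSelfOrParent hu hu' hux hu'y
          (Or.inr ⟨hadj, h⟩)
  exact hne (huu' ▸ rfl)

lemma Connected.exists_mem_childDimers_dist_le_one (hG : G.Connected)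
    (hf : ∀ v, G.Adj v (f v) ∧ G.dist r (f v) = G.dist r v + 1) (v : V) :
    ∃ b ∈ G.childDimers r f, ∃ x ∈ b, G.dist v x ≤ 1 := by
  have hmod : G.dist r v % 3 = 0 ∨ G.dist r v % 3 = 1 ∨ G.dist r v % 3 = 2 := by omega
  rcases hmod with h | h | h
  · exact ⟨s(f v, f (f v)), ⟨f v, by have := (hf v).2; omega, rfl⟩, f v, Sym2.mem_mk_left _ _,
      (dist_eq_one_iff_adj.2 (hf v).1).le⟩
  · exact ⟨s(v, f v), ⟨v, h, rfl⟩, v, Sym2.mem_mk_left _ _, by simp⟩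
  · have hvr : v ≠ r := by rintro rfl; simp at h
    obtain ⟨p, hpv, hp⟩ := hG.exists_adj_dist_add_one_eq hvr
    exact ⟨s(p, f p), ⟨p, by omega, rfl⟩, p, Sym2.mem_mk_left _ _,
      (dist_eq_one_iff_adj.2 hpv.symm).le⟩

end childDimers

end SimpleGraph

open SimpleGraph

/-- The Cayley tree admits a monomer-dimer covering: a set `D*` of edges
such that any two distinct edges of `D*` are at graph distance at least 2 (no endpoint
of one is equal or adjacent to an endpoint of the other), and every vertex is at
distance at most 1 from (an endpoint of) some edge of `D*`. -/
theorem monomer_dimer_covering_exists {V : Type*} (G : SimpleGraph V) (k : ℕ)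
    (hk : 2 ≤ k) (hG : IsCayleyTree G k) :
    ∃ Dstar : Set (Sym2 V), Dstar ⊆ G.edgeSet
      ∧ (∀ b' ∈ Dstar, ∀ b'' ∈ Dstar, b' ≠ b'' →
          ∀ x ∈ b', ∀ y ∈ b'', 2 ≤ G.dist x y)
      ∧ (∀ v : V, ∃ b ∈ Dstar, ∃ x ∈ b, G.dist v x ≤ 1) := by
  obtain ⟨-, hc, ha, hdeg⟩ := hG
  have hT : G.IsTree := ⟨hc, ha⟩
  have hnt : ∀ v, (G.neighborSet v).Nontrivial := fun v =>
    (Set.one_lt_ncard_iff_nontrivial_and_finite.1 (by rw [hdeg v]; omega)).1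
  obtain ⟨r⟩ := hc.nonempty
  choose f hf using fun v => hT.exists_adj_dist_eq_add_one r (hnt v)
  exact ⟨G.childDimers r f, childDimers_subset_edgeSet fun v => (hf v).1,
    hT.two_le_dist_of_mem_childDimers hf, hc.exists_mem_childDimers_dist_le_one hf⟩
end
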